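/- The function F(h) = E[tanh(z·√h + h)] (z standard Gaussian), extended by F(0) = 0, is invertible on [0,∞), its inverse F⁻¹ is nonnegative and increasing on [0,1), and F⁻¹(x) → +∞ as x → 1⁻. -/

import Mathlib

/-!
In the variable `s = √h` the function becomes `FNLsq s = E[tanh (z s + s²)]`, whose
integrand is smooth in `s`, so `FNLsq' s = E[tanh' u · (z + 2 s)]` with `u = z s + s²`.
Gaussian integration by parts, `E[z g z] = E[g' z]` for `g z = tanh' u`, together with
`tanh'' = -2 tanh · tanh'` turns this into `FNLsq' s = 2 s E[tanh' u · (1 - tanh u)]`, which is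
positive for `s > 0`. Hence `F` is strictly increasing on `[0, ∞)`; since `F 0 = 0`, `F < 1`
and `F h → 1`, it maps `[0, ∞)` bijectively onto `[0, 1)`, and the inverse is increasing and
unbounded as `x → 1⁻`.
-/

open MeasureTheory ProbabilityTheory Real Set Filter

/-- `F(h) = E_z[tanh(z√h + h)]` with `z ~ N(0,1)`; note `F 0 = 0`. -/
noncomputable def FNL (h : ℝ) : ℝ :=
  ∫ z, Real.tanh (z * Real.sqrt h + h) ∂(gaussianReal 0 1)

open Topology
open scoped NNReal

namespace Real

theorem hasDerivAt_tanh (x : ℝ) : HasDerivAt tanh (1 - tanh x ^ 2) x := by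
  have h := (hasDerivAt_sinh x).div (hasDerivAt_cosh x) (cosh_pos x).ne'
  rw [show sinh / cosh = tanh from funext fun y => (tanh_eq_sinh_div_cosh y).symm] at h
  refine h.congr_deriv ?_
  rw [tanh_eq_sinh_div_cosh]
  field_simp

theorem abs_one_sub_tanh_sq_le_one (x : ℝ) : |1 - tanh x ^ 2| ≤ 1 := by
  rw [abs_of_pos (sub_pos.2 (tanh_sq_lt_one x))]
  linarith [sq_nonneg (tanh x)]

@[fun_prop]
theorem continuous_tanh : Continuous tanh :=
  continuous_iff_continuousAt.2 fun x => (hasDerivAt_tanh x).continuousAt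

theorem tendsto_tanh_atTop : Tendsto tanh atTop (𝓝 1) := by
  have h_eq : ∀ x, tanh x = 1 - 2 / (exp (2 * x) + 1) := fun x => by
    rw [tanh_eq, exp_neg, two_mul, exp_add]
    field_simp
    ring
  have h_lim : Tendsto (fun x => 2 / (exp (2 * x) + 1)) atTop (𝓝 0) :=
    tendsto_const_nhds.div_atTop <| tendsto_atTop_add_const_right _ 1 <|
      tendsto_exp_atTop.comp (tendsto_id.const_mul_atTop two_pos)
  simpa [← h_eq] using tendsto_const_nhds.sub h_lim (a := (1 : ℝ))

end Real

lemma hasDerivAt_gaussianPDFReal (μ : ℝ) (v : ℝ≥0) (x : ℝ) :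
    HasDerivAt (gaussianPDFReal μ v) (-((x - μ) / v) * gaussianPDFReal μ v x) x := by
  have h_exponent : HasDerivAt (fun y => -(y - μ) ^ 2 / (2 * v)) (-((x - μ) / v)) x := by
    refine ((((hasDerivAt_id' x).sub_const μ).pow 2).neg.div_const (2 * (v : ℝ))).congr_deriv ?_
    ring
  rw [gaussianPDFReal_def]
  refine (h_exponent.exp.const_mul (√(2 * π * v))⁻¹).congr_deriv ?_
  ring

lemma integrable_gaussianReal_iff {E : Type*} [NormedAddCommGroup E] [NormedSpace ℝ E]
    {μ : ℝ} {v : ℝ≥0} (hv : v ≠ 0) {f : ℝ → E} :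
    Integrable f (gaussianReal μ v) ↔ Integrable (fun x => gaussianPDFReal μ v x • f x) := by
  rw [gaussianReal_of_var_ne_zero μ hv, integrable_withDensity_iff_integrable_smul'
    (measurable_gaussianPDF μ v) (ae_of_all _ fun _ => gaussianPDF_lt_top)]
  simp only [toReal_gaussianPDF]

-- Stein's lemma.
theorem integral_sub_mul_gaussianReal (μ : ℝ) (v : ℝ≥0) {g g' : ℝ → ℝ}
    (hg : ∀ x, HasDerivAt g (g' x) x) {C C' : ℝ} (hg_bdd : ∀ x, |g x| ≤ C)
    (hg'_bdd : ∀ x, |g' x| ≤ C') :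
    ∫ x, (x - μ) * g x ∂gaussianReal μ v = v * ∫ x, g' x ∂gaussianReal μ v := by
  rcases eq_or_ne v 0 with rfl | hv
  · simp [gaussianReal_zero_var]
  have hg_cont : Continuous g := continuous_iff_continuousAt.2 fun x => (hg x).continuousAt
  have hg'_meas : Measurable g' := by
    simpa only [funext fun x => (hg x).deriv] using measurable_deriv g
  have h_int_g : Integrable g (gaussianReal μ v) :=
    .of_bound hg_cont.aestronglyMeasurable C (ae_of_all _ hg_bdd)
  have h_int_g' : Integrable g' (gaussianReal μ v) :=
    .of_bound hg'_meas.aestronglyMeasurable C' (ae_of_all _ hg'_bdd)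
  have h_int_mul : Integrable (fun x => (x - μ) * g x) (gaussianReal μ v) :=
    (((memLp_id_gaussianReal 1).integrable le_rfl).sub (integrable_const μ)).mul_bdd
      hg_cont.aestronglyMeasurable (ae_of_all _ hg_bdd)
  rw [integrable_gaussianReal_iff hv] at h_int_g h_int_g' h_int_mul
  set φ := gaussianPDFReal μ v
  have h_deriv : ∀ x, HasDerivAt (fun x => φ x * g x)
      (φ x • g' x - (v : ℝ)⁻¹ * φ x • ((x - μ) * g x)) x := fun x =>
    ((hasDerivAt_gaussianPDFReal μ v x).mul (hg x)).congr_deriv (by simp only [smul_eq_mul]; ring)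
  have h_zero := integral_eq_zero_of_hasDerivAt_of_integrable h_deriv
    (h_int_g'.sub (h_int_mul.const_mul _)) h_int_g
  rw [integral_sub h_int_g' (h_int_mul.const_mul _), integral_const_mul, sub_eq_zero] at h_zero
  rw [integral_gaussianReal_eq_integral_smul hv, integral_gaussianReal_eq_integral_smul hv,
    h_zero, mul_inv_cancel_left₀ (NNReal.coe_ne_zero.2 hv)]

lemma integral_pos_of_forall_pos {α : Type*} [MeasurableSpace α] {μ : Measure α} [NeZero μ]
    {f : α → ℝ} (hf : Integrable f μ) (hpos : ∀ x, 0 < f x) : 0 < ∫ x, f x ∂μ := by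
  rw [integral_pos_iff_support_of_nonneg (fun x => (hpos x).le) hf,
    Function.support_eq_univ fun x => (hpos x).ne']
  exact Measure.measure_univ_pos.2 (NeZero.ne μ)

noncomputable def FNLsq (s : ℝ) : ℝ :=
  ∫ z, tanh (z * s + s ^ 2) ∂gaussianReal 0 1

lemma FNL_eq_FNLsq_sqrt {h : ℝ} (hh : 0 ≤ h) : FNL h = FNLsq (√h) := by
  simp [FNL, FNLsq, sq_sqrt hh]

lemma FNLsq_zero : FNLsq 0 = 0 := by
  simp [FNLsq]

lemma hasDerivAt_FNLsq (s : ℝ) :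
    HasDerivAt FNLsq
      (∫ z, (1 - tanh (z * s + s ^ 2) ^ 2) * (z + 2 * s) ∂gaussianReal 0 1) s := by
  have h_int_abs : Integrable (fun z : ℝ => |z|) (gaussianReal 0 1) :=
    ((memLp_id_gaussianReal 1).integrable le_rfl).abs
  have h_bound : ∀ z, ∀ t ∈ Metric.ball s 1,
      ‖(1 - tanh (z * t + t ^ 2) ^ 2) * (z + 2 * t)‖ ≤ |z| + 2 * (|s| + 1) := by
    intro z t ht
    have ht' : |t| ≤ |s| + 1 := by
      have := abs_sub_abs_le_abs_sub t s
      rw [Metric.mem_ball, dist_eq_norm, norm_eq_abs] at ht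
      linarith
    rw [norm_mul, norm_eq_abs, norm_eq_abs]
    calc |1 - tanh (z * t + t ^ 2) ^ 2| * |z + 2 * t|
        ≤ 1 * (|z| + 2 * |t|) := by
          gcongr
          · exact abs_one_sub_tanh_sq_le_one _
          · exact (abs_add_le _ _).trans (by rw [abs_mul, abs_two])
      _ ≤ |z| + 2 * (|s| + 1) := by linarith
  have h_diff : ∀ z t, HasDerivAt (fun t => tanh (z * t + t ^ 2))
      ((1 - tanh (z * t + t ^ 2) ^ 2) * (z + 2 * t)) t := fun z t =>
    ((hasDerivAt_tanh _).comp t (((hasDerivAt_id' t).const_mul z).add (hasDerivAt_pow 2 t))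
      ).congr_deriv (by simp only [Pi.add_apply, mul_one, Nat.cast_ofNat]; ring)
  exact (hasDerivAt_integral_of_dominated_loc_of_deriv_le (Metric.ball_mem_nhds s one_pos)
    (.of_forall fun _ => by fun_prop)
    (.of_bound (by fun_prop) 1 (ae_of_all _ fun _ => (abs_tanh_lt_one _).le)) (by fun_prop)
    (ae_of_all _ fun z => h_bound z) (h_int_abs.add (integrable_const _))
    (ae_of_all _ fun z t _ => h_diff z t)).2

lemma continuous_FNLsq : Continuous FNLsq :=
  continuous_iff_continuousAt.2 fun s => (hasDerivAt_FNLsq s).continuousAt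

lemma integral_one_sub_tanh_sq_mul_eq (s : ℝ) :
    ∫ z, (1 - tanh (z * s + s ^ 2) ^ 2) * (z + 2 * s) ∂gaussianReal 0 1 =
      2 * s * ∫ z, (1 - tanh (z * s + s ^ 2) ^ 2) * (1 - tanh (z * s + s ^ 2))
        ∂gaussianReal 0 1 := by
  set g : ℝ → ℝ := fun z => 1 - tanh (z * s + s ^ 2) ^ 2
  set g' : ℝ → ℝ := fun z => -(2 * tanh (z * s + s ^ 2) * g z) * s
  have hg : ∀ z, HasDerivAt g (g' z) z := fun z =>
    ((((hasDerivAt_tanh _).comp z (((hasDerivAt_id' z).mul_const s).add_const (s ^ 2))).pow 2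
      ).const_sub 1).congr_deriv (by simp only [g', g, Function.comp_apply, Nat.cast_ofNat]; ring)
  have hg_bdd : ∀ z, |g z| ≤ 1 := fun z => abs_one_sub_tanh_sq_le_one _
  have hg'_bdd : ∀ z, |g' z| ≤ 2 * |s| := fun z => by
    simp only [g', abs_mul, abs_neg, abs_two]
    have := mul_le_one₀ (abs_tanh_lt_one (z * s + s ^ 2)).le (abs_nonneg _) (hg_bdd z)
    nlinarith [abs_nonneg s]
  have h_stein := integral_sub_mul_gaussianReal 0 1 hg hg_bdd hg'_bdd
  simp only [sub_zero, NNReal.coe_one, one_mul] at h_stein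
  have hg_int : Integrable g (gaussianReal 0 1) :=
    .of_bound (by fun_prop) 1 (ae_of_all _ hg_bdd)
  have hg'_int : Integrable g' (gaussianReal 0 1) :=
    .of_bound (by fun_prop) (2 * |s|) (ae_of_all _ hg'_bdd)
  have hzg_int : Integrable (fun z => z * g z) (gaussianReal 0 1) :=
    ((memLp_id_gaussianReal 1).integrable le_rfl).mul_bdd (by fun_prop) (ae_of_all _ hg_bdd)
  calc ∫ z, g z * (z + 2 * s) ∂gaussianReal 0 1
      = ∫ z, (z * g z + 2 * s * g z) ∂gaussianReal 0 1 := by congr with z; ring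
    _ = ∫ z, (g' z + 2 * s * g z) ∂gaussianReal 0 1 := by
      rw [integral_add hzg_int (hg_int.const_mul _), integral_add hg'_int (hg_int.const_mul _),
        h_stein]
    _ = 2 * s * ∫ z, g z * (1 - tanh (z * s + s ^ 2)) ∂gaussianReal 0 1 := by
      rw [← integral_const_mul]; congr with z; simp only [g']; ring

lemma strictMonoOn_FNLsq : StrictMonoOn FNLsq (Ici 0) := by
  refine strictMonoOn_of_deriv_pos (convex_Ici 0) continuous_FNLsq.continuousOn fun s hs => ?_
  rw [interior_Ici, mem_Ioi] at hs
  rw [(hasDerivAt_FNLsq s).deriv, integral_one_sub_tanh_sq_mul_eq]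
  refine mul_pos (by positivity) (integral_pos_of_forall_pos ?_ fun z => ?_)
  · refine .of_bound (by fun_prop) (1 * 2) (ae_of_all _ fun z => ?_)
    rw [norm_mul]
    exact mul_le_mul (abs_one_sub_tanh_sq_le_one _)
      ((abs_sub _ _).trans (by rw [abs_one]; linarith [abs_tanh_lt_one (z * s + s ^ 2)]))
      (norm_nonneg _) zero_le_one
  · exact mul_pos (sub_pos.2 (tanh_sq_lt_one _)) (sub_pos.2 (tanh_lt_one _))

lemma tendsto_FNLsq_atTop : Tendsto FNLsq atTop (𝓝 1) := by
  have h_lim : ∀ z : ℝ, Tendsto (fun s => tanh (z * s + s ^ 2)) atTop (𝓝 1) := fun z =>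
    tendsto_tanh_atTop.comp <| (tendsto_id.atTop_mul_atTop₀
      (tendsto_atTop_add_const_left atTop z tendsto_id)).congr fun s => by simp only [id]; ring
  show Tendsto (fun s => ∫ z, tanh (z * s + s ^ 2) ∂gaussianReal 0 1) atTop (𝓝 1)
  simpa using tendsto_integral_filter_of_dominated_convergence (fun _ => 1)
    (.of_forall fun s => by fun_prop)
    (.of_forall fun s => ae_of_all _ fun z => (abs_tanh_lt_one _).le)
    (integrable_const 1) (ae_of_all (gaussianReal 0 1) h_lim)

lemma FNL_lt_one (h : ℝ) : FNL h < 1 := by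
  have h_int : Integrable (fun z => tanh (z * √h + h)) (gaussianReal 0 1) :=
    .of_bound (by fun_prop) 1 (ae_of_all _ fun _ => (abs_tanh_lt_one _).le)
  have h_pos := integral_pos_of_forall_pos (f := fun z => 1 - tanh (z * √h + h))
    ((integrable_const 1).sub h_int)
    fun z => sub_pos.2 (tanh_lt_one (z * √h + h))
  rw [integral_sub (integrable_const 1) h_int] at h_pos
  simpa [FNL] using h_pos

lemma strictMonoOn_FNL : StrictMonoOn FNL (Ici 0) := fun a ha b hb hab => by
  rw [FNL_eq_FNLsq_sqrt ha, FNL_eq_FNLsq_sqrt hb]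
  exact strictMonoOn_FNLsq (sqrt_nonneg a) (sqrt_nonneg b) (sqrt_lt_sqrt ha hab)

lemma bijOn_FNL : BijOn FNL (Ici 0) (Ico 0 1) := by
  refine ⟨fun h hh => ⟨?_, FNL_lt_one h⟩, strictMonoOn_FNL.injOn, fun x hx => ?_⟩
  · rw [FNL_eq_FNLsq_sqrt hh, ← FNLsq_zero]
    exact strictMonoOn_FNLsq.monotoneOn self_mem_Ici (sqrt_nonneg h) (sqrt_nonneg h)
  obtain ⟨s₀, hs₀, hs₀_nonneg⟩ :=
    ((tendsto_FNLsq_atTop.eventually (Ioi_mem_nhds hx.2)).and (eventually_ge_atTop 0)).exists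
  have hx_mem : x ∈ Icc (FNLsq 0) (FNLsq s₀) :=
    ⟨FNLsq_zero.symm ▸ hx.1, (mem_Ioi.1 hs₀).le⟩
  obtain ⟨s, hs, hs_eq⟩ :=
    intermediate_value_Icc hs₀_nonneg continuous_FNLsq.continuousOn hx_mem
  exact ⟨s ^ 2, sq_nonneg s, by rw [FNL_eq_FNLsq_sqrt (sq_nonneg s), sqrt_sq hs.1, hs_eq]⟩

/-- `F` is invertible on `[0,∞)`: it is injective there and admits an inverse `G`
defined on `[0,1)` which is nonnegative, increasing, and tends to `+∞` as `x → 1⁻`. -/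
theorem FNL_invertible :
    Set.InjOn FNL (Set.Ici 0) ∧
    ∃ G : ℝ → ℝ,
      (∀ h ∈ Set.Ici (0 : ℝ), G (FNL h) = h) ∧
      (∀ x ∈ Set.Ico (0 : ℝ) 1, FNL (G x) = x) ∧
      (∀ x ∈ Set.Ico (0 : ℝ) 1, 0 ≤ G x) ∧
      MonotoneOn G (Set.Ico (0 : ℝ) 1) ∧
      Tendsto G (nhdsWithin 1 (Set.Iio 1)) atTop := by
  set G := Function.invFunOn FNL (Ici 0)
  have h_left : ∀ h ∈ Ici (0 : ℝ), G (FNL h) = h := bijOn_FNL.injOn.leftInvOn_invFunOn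
  have h_right : ∀ x ∈ Ico (0 : ℝ) 1, FNL (G x) = x := bijOn_FNL.surjOn.rightInvOn_invFunOn
  have h_maps : MapsTo G (Ico 0 1) (Ici 0) := bijOn_FNL.surjOn.mapsTo_invFunOn
  have h_mono : MonotoneOn G (Ico 0 1) := fun x hx y hy hxy =>
    (strictMonoOn_FNL.le_iff_le (h_maps hx) (h_maps hy)).1
      (by rwa [h_right x hx, h_right y hy])
  refine ⟨bijOn_FNL.injOn, G, h_left, h_right, h_maps, h_mono, tendsto_atTop.2 fun M => ?_⟩
  have hM : FNL (max M 0) ∈ Ico 0 1 := bijOn_FNL.mapsTo (le_max_right M 0)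
  filter_upwards [Ioo_mem_nhdsLT hM.2] with x hx
  calc M ≤ max M 0 := le_max_left M 0
    _ = G (FNL (max M 0)) := (h_left _ (le_max_right M 0)).symm
    _ ≤ G x := h_mono hM ⟨hM.1.trans hx.1.le, hx.2⟩ hx.1.le
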